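/- Let V, W be finite-dimensional ℂ-vector spaces and c ∣ d. Then for all X ∈ Hom_{R_c}(W ⊗ R_c, V ⊗ R_d) and Y ∈ Hom_{R_c}(V ⊗ R_d, W ⊗ R_c), one has ⟨X,Y⟩_c = ⟨X^{R_d}, Y^{R_d}⟩_d, where the pairings are the residue-trace pairings over R_c and R_d respectively. -/

import Mathlib

open Polynomial Finset

/-!
Once both traces are written in coordinates, the identity is a reindexing. The residue of
`ε_d^k f` is the coefficient of `ε_d^{d-1-k}` in `f`, so the right-hand side is
`Σ_k coeff_{d-1-k} (XY(ε_d^{m-1-k} e_i))_i` with `m = d/c`; reflecting `k ↦ m-1-k` and using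
`cm = d`, i.e. `d - m = (c-1)m`, gives the left-hand side.
-/

/-- The truncated polynomial ring `R_d = ℂ[ε]/(ε^d)`. -/
abbrev Rmod (d : ℕ) : Type := AdjoinRoot (X ^ d : ℂ[X])

/-- The class of the variable `ε` in `R_d`. -/
noncomputable def eps (d : ℕ) : Rmod d := AdjoinRoot.root _

/-- The coefficient of `ε^k` of (the canonical representative of) an element of `R_d`. -/
noncomputable def coeffD (d : ℕ) (k : ℕ) (f : Rmod d) : ℂ :=
  (AdjoinRoot.modByMonicHom (monic_X_pow d) f).coeff k

/-- The residue `res_{ε=0}(f dε/ε^d)`, i.e. the coefficient of `ε^{d-1}`. -/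
noncomputable def res (d : ℕ) (f : Rmod d) : ℂ := coeffD d (d - 1) f

lemma Polynomial.coeff_modByMonic_X_pow {R : Type*} [Ring R] {d j : ℕ} (hj : j < d)
    (p : R[X]) : (p %ₘ X ^ d).coeff j = p.coeff j := by
  conv_rhs => rw [← modByMonic_add_div p (X ^ d)]
  rw [coeff_add, coeff_X_pow_mul', if_neg (not_le.mpr hj), add_zero]

lemma coeffD_mk {d j : ℕ} (hj : j < d) (g : ℂ[X]) :
    coeffD d j (AdjoinRoot.mk _ g) = g.coeff j := by
  rw [coeffD, AdjoinRoot.modByMonicHom_mk, coeff_modByMonic_X_pow hj]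

lemma coeffD_sum {α : Type*} (s : Finset α) (d j : ℕ) (f : α → Rmod d) :
    coeffD d j (∑ x ∈ s, f x) = ∑ x ∈ s, coeffD d j (f x) := by
  simp only [coeffD, map_sum, finsetSum_coeff]

lemma res_eps_pow_mul {d k : ℕ} (hk : k < d) (f : Rmod d) :
    res d (eps d ^ k * f) = coeffD d (d - 1 - k) f := by
  obtain ⟨g, rfl⟩ := AdjoinRoot.mk_surjective f
  have hmk : eps d ^ k * AdjoinRoot.mk _ g = AdjoinRoot.mk _ (X ^ k * g) := by
    rw [map_mul, map_pow, AdjoinRoot.mk_X, eps]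
  rw [hmk, res, coeffD_mk (by omega), coeffD_mk (by omega), coeff_X_pow_mul', if_pos (by omega),
    Nat.sub_right_comm]

lemma res_sum_eps_pow_mul {d m : ℕ} (hm : m ≤ d) (f : ℕ → Rmod d) :
    res d (∑ k ∈ range m, eps d ^ k * f k) = ∑ k ∈ range m, coeffD d (d - 1 - k) (f k) := by
  rw [res, coeffD_sum]
  refine sum_congr rfl fun k hk => ?_
  rw [← res, res_eps_pow_mul (by rw [mem_range] at hk; omega)]

/-- The left-hand side is the residue of the `R_c`-trace of `XY` on `V ⊗ R_d = R_d^n`, computed in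
the `R_c`-basis `ε_d^k e_i` (`0 ≤ k < d/c`, `1 ≤ i ≤ n`): the `(i,k)`-diagonal coefficient of
`ε_c^{c-1}` is the coefficient of `ε_d^{k+(c-1)(d/c)}` of `(X Y (ε_d^k e_i))_i`. The right-hand
side is the residue of the `R_d`-trace of
`X^{R_d} Y^{R_d} = pr_{c,d}(XY) : v ↦ Σ_k ε_d^k (XY)(ε_d^{d/c-1-k} v)`. -/
theorem stmt5_general (c d n p : ℕ) (hcd : c ∣ d)
    (X : (Fin p → Rmod c) → (Fin n → Rmod d))
    (Y : (Fin n → Rmod d) → (Fin p → Rmod c)) :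
    -- `⟨X,Y⟩_c` :
    (∑ i : Fin n, ∑ k ∈ Finset.range (d / c),
        coeffD d (k + (c - 1) * (d / c))
          ((X (Y (eps d ^ k • (Pi.single i 1 : Fin n → Rmod d)))) i))
    -- `⟨X^{R_d},Y^{R_d}⟩_d` :
    = ∑ i : Fin n, res d
        ((∑ k ∈ Finset.range (d / c),
            eps d ^ k • X (Y (eps d ^ (d / c - 1 - k) •
              (Pi.single i 1 : Fin n → Rmod d)))) i) := by
  have hm : d / c ≤ d := Nat.div_le_self d c
  have hdm : (c - 1) * (d / c) = d - d / c := by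
    rw [Nat.sub_mul, one_mul, Nat.mul_div_cancel' hcd]
  refine sum_congr rfl fun i _ => ?_
  simp only [Finset.sum_apply, Pi.smul_apply, smul_eq_mul]
  rw [res_sum_eps_pow_mul hm, ← sum_range_reflect]
  refine sum_congr rfl fun k hk => ?_
  rw [mem_range] at hk
  congr 2
  omega

/-- `⟨X,Y⟩_c = ⟨X^{R_d},Y^{R_d}⟩_d` for `R_c`-linear maps
`X : W ⊗ R_c → V ⊗ R_d` and `Y : V ⊗ R_d → W ⊗ R_c`.  The left-hand side is the
residue of the `R_c`-trace of `XY` on `V ⊗ R_d = R_d^n`, computed in the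
`R_c`-basis `ε_d^k e_i` (`0 ≤ k < d/c`, `1 ≤ i ≤ n`): the `(i,k)`-diagonal
coefficient of `ε_c^{c-1}` is the coefficient of `ε_d^{k+(c-1)(d/c)}` of
`(X Y (ε_d^k e_i))_i`.  The right-hand side is the residue of the `R_d`-trace of
`X^{R_d} Y^{R_d} = pr_{c,d}(XY) : v ↦ Σ_k ε_d^k (XY)(ε_d^{d/c-1-k} v)`. -/
theorem stmt5 (c d n p : ℕ) (hc : 0 < c) (hcd : c ∣ d)
    (X : (Fin p → Rmod c) → (Fin n → Rmod d))
    (Y : (Fin n → Rmod d) → (Fin p → Rmod c))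
    (hXadd : ∀ w w', X (w + w') = X w + X w')
    (hXsmul : ∀ (z : ℂ) w, X (z • w) = z • X w)
    (hXc : ∀ w, X (eps c • w) = eps d ^ (d / c) • X w)
    (hYadd : ∀ v v', Y (v + v') = Y v + Y v')
    (hYsmul : ∀ (z : ℂ) v, Y (z • v) = z • Y v)
    (hYc : ∀ v, Y (eps d ^ (d / c) • v) = eps c • Y v) :
    -- `⟨X,Y⟩_c` :
    (∑ i : Fin n, ∑ k ∈ Finset.range (d / c),
        coeffD d (k + (c - 1) * (d / c))
          ((X (Y (eps d ^ k • (Pi.single i 1 : Fin n → Rmod d)))) i))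
    -- `⟨X^{R_d},Y^{R_d}⟩_d` :
    = ∑ i : Fin n, res d
        ((∑ k ∈ Finset.range (d / c),
            eps d ^ k • X (Y (eps d ^ (d / c - 1 - k) •
              (Pi.single i 1 : Fin n → Rmod d)))) i) :=
  stmt5_general c d n p hcd X Y
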